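/- For each m ∈ ℕ and d ≥ 1 there exists a constant K(m) depending only on m (and d) such that the fundamental spline interpolation operator J^m is bounded on L_∞: for every bounded function f on ℝ^d one has ‖J^m f‖_∞ ≤ K(m) ‖f‖_∞. -/

import Mathlib

open MeasureTheory Filter Topology
open scoped ENNReal NNReal BigOperators

noncomputable section

/-- The m-th order cardinal B-spline `N_m`, with `N_1 = χ_{[0,1)}` and
`N_m = N_{m-1} * N_1` (convolution). -/
def bspline : ℕ → ℝ → ℝ
  | 0, _ => 0
  | 1, x => if 0 ≤ x ∧ x < 1 then 1 else 0
  | (n+2), x => ∫ t in (0:ℝ)..1, bspline (n+1) (x - t)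

/-- The m-th order Chui–Wang wavelet
`ψ_m(x) = 2^{-(m-1)} Σ_{l=0}^{2m-2} (-1)^l N_{2m}(l+1) N_{2m}^{(m)}(2x-l)`. -/
def chuiWang (m : ℕ) (x : ℝ) : ℝ :=
  ((2:ℝ)^(m-1))⁻¹ * ∑ l ∈ Finset.range (2*m-1),
    (-1:ℝ)^l * bspline (2*m) ((l:ℝ)+1) * iteratedDeriv m (bspline (2*m)) (2*x - (l:ℝ))

/-- `ψs` is the dual wavelet of the m-th order Chui–Wang wavelet `ψ_m`:
it is biorthogonal to the system `2^{j/2} ψ_m(2^j · − l)` and it belongs to the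
`L_2`-closure of the span of the integer translates of `ψ_m` (the wavelet space `W_0`). -/
def IsDualWavelet (m : ℕ) (ψs : ℝ → ℝ) : Prop :=
  (∀ j k l : ℤ, (∫ x : ℝ, ψs (x - (k:ℝ)) * ((2:ℝ)^((j:ℝ)/2) * chuiWang m ((2:ℝ)^j * x - (l:ℝ))))
      = if j = 0 ∧ k = l then 1 else 0) ∧
  ∀ δ : ℝ, 0 < δ → ∃ b : ℤ →₀ ℝ,
    eLpNorm (fun x : ℝ => ψs x - ∑ n ∈ b.support, b n * chuiWang m (x - (n:ℝ))) 2 volume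
      < ENNReal.ofReal δ

/-- `Lc` is the cardinal interpolating spline of order m:
`Lc(x) = Σ_n c_n N_m(x+m/2−n)` with exponentially decaying coefficients,
and `Lc(j) = δ_{j,0}`. -/
def IsCardinalSpline (m : ℕ) (Lc : ℝ → ℝ) : Prop :=
  (∃ c : ℤ → ℝ, (∃ C > (0:ℝ), ∃ q : ℝ, 0 < q ∧ q < 1 ∧ ∀ n : ℤ, |c n| ≤ C * q ^ n.natAbs) ∧
    ∀ x : ℝ, Lc x = ∑' n : ℤ, c n * bspline m (x + (m:ℝ)/2 - (n:ℝ))) ∧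
  ∀ j : ℤ, Lc (j : ℝ) = if j = 0 then 1 else 0

/-- Univariate Faber splines of order 2m:
`s_{2m;j,k}(x) = 2^{mj} ∫_{-∞}^x ψ_m^*(2^j t − k) (x−t)^{m-1}/(m-1)! dt` for `j ≥ 0`,
and `s_{2m;-1,k} = L^{2m}(·−k)`. -/
def faber1 (m : ℕ) (ψs Lc : ℝ → ℝ) (j k : ℤ) (x : ℝ) : ℝ :=
  if j = -1 then Lc (x - (k:ℝ))
  else (2:ℝ)^((m:ℤ) * j) *
    ∫ t in Set.Iic x, ψs ((2:ℝ)^j * t - (k:ℝ)) * (x - t)^(m-1) / ((m-1).factorial : ℝ)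

/-- Tensorized Faber splines `s_{2m;j,k}(x) = Π_i s_{2m;j_i,k_i}(x_i)`. -/
def faber (d m : ℕ) (ψs Lc : ℝ → ℝ) (j k : Fin d → ℤ) (x : Fin d → ℝ) : ℝ :=
  ∏ i, faber1 m ψs Lc (j i) (k i) (x i)

/-- First order difference with step `h` in direction `i`. -/
def dirDiff {d : ℕ} (i : Fin d) (h : ℝ) (f : (Fin d → ℝ) → ℝ) : (Fin d → ℝ) → ℝ :=
  fun x => f (Function.update x i (x i + h)) - f x

/-- Mixed `n`-th order difference operator acting in the directions contained in `e`. -/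
def mixedDiff {d : ℕ} (n : ℕ) (e : Finset (Fin d)) (h : Fin d → ℝ)
    (f : (Fin d → ℝ) → ℝ) : (Fin d → ℝ) → ℝ :=
  e.toList.foldr (fun i g => (dirDiff i (h i))^[n] g) f

/-- `e(j) = {i : j_i ≥ 0}`. -/
def posSet {d : ℕ} (j : Fin d → ℤ) : Finset (Fin d) :=
  Finset.univ.filter (fun i => 0 ≤ j i)

/-- The dyadic sample points `x_{j;k,l}`. -/
def samplePt {d : ℕ} (j k : Fin d → ℤ) (l : Fin d → ℕ) : Fin d → ℝ := fun i =>
  if j i = -1 then (k i : ℝ) else (2 * (k i : ℝ) + (l i : ℝ)) / (2:ℝ)^(j i + 1)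

/-- The Faber coefficients `λ_{2m;j,k}(f)`. -/
def faberCoeff (d m : ℕ) (f : (Fin d → ℝ) → ℝ) (j k : Fin d → ℤ) : ℝ :=
  ∑ l : Fin d → Fin (2*m-1),
    (∏ i ∈ posSet j, (-1:ℝ)^((l i : ℕ))) * (∏ i, bspline (2*m) (((l i : ℕ) : ℝ) + 1)) *
      mixedDiff (2*m) (posSet j) (fun i => (2:ℝ)^(-(j i) - 1)) f
        (samplePt j k (fun i => (l i : ℕ)))

/-- Membership in the tensor-product spline space `V_N^m`. -/
def MemVNm (d m N : ℕ) (f : (Fin d → ℝ) → ℝ) : Prop :=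
  ∃ a : Fin d → ℤ → ℝ, (∀ i, Summable fun n : ℤ => |a i n|) ∧
    ∀ x : Fin d → ℝ, f x = ∏ i, ∑' n : ℤ, a i n * bspline m ((2:ℝ)^N * x i - (n:ℝ))

/-- The fundamental spline interpolation operator `J_N^m` (built from the
cardinal interpolating spline `Lc`). -/
def JNm (d N : ℕ) (Lc : ℝ → ℝ) (f : (Fin d → ℝ) → ℝ) (x : Fin d → ℝ) : ℝ :=
  ∑' n : Fin d → ℤ, f (fun i => (n i : ℝ) / (2:ℝ)^N) * ∏ i, Lc ((2:ℝ)^N * x i - (n i : ℝ))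

/-- The truncated Faber spline expansion operator `S_N^m`. -/
def SNm (d m N : ℕ) (ψs Lc : ℝ → ℝ) (f : (Fin d → ℝ) → ℝ) (x : Fin d → ℝ) : ℝ :=
  ∑' j : Fin d → ℤ, if (∀ i, -1 ≤ j i ∧ j i < (N:ℤ)) then
      ∑' k : Fin d → ℤ, faberCoeff d m f j k * faber d m ψs Lc j k x
    else 0

/-- The dyadic interval `I_{j,k}`. -/
def dyadicI (j k : ℤ) : Set ℝ :=
  if j = -1 then Set.Icc ((k:ℝ) - 1/2) ((k:ℝ) + 1/2)
  else Set.Icc ((2:ℝ)^(-j) * (k:ℝ)) ((2:ℝ)^(-j) * ((k:ℝ)+1))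

/-- The dyadic box `I_{j,k}` in `ℝ^d`. -/
def dyadicBox (d : ℕ) (j k : Fin d → ℤ) : Set (Fin d → ℝ) :=
  {x | ∀ i, x i ∈ dyadicI (j i) (k i)}

/-- `|j|_1` as a real number. -/
def jsum {d : ℕ} (j : Fin d → ℤ) : ℝ := ∑ i, (j i : ℝ)

/-- The weight `2^{r|j|_1}`. -/
def wt (r : ℝ) {d : ℕ} (j : Fin d → ℤ) : ℝ≥0∞ := ENNReal.ofReal ((2:ℝ) ^ (r * jsum j))

/-- The weight `2^{r|j|_1}` for `j ∈ ℕ_0^d`. -/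
def wtN (r : ℝ) {d : ℕ} (j : Fin d → ℕ) : ℝ≥0∞ :=
  ENNReal.ofReal ((2:ℝ) ^ (r * ∑ i, (j i : ℝ)))

/-- `L_p` quasi-norm (`0 < p ≤ ∞`) of an `ℝ≥0∞`-valued function. -/
def lpNormE {α : Type*} [MeasurableSpace α] (μ : Measure α) (p : ℝ≥0∞) (g : α → ℝ≥0∞) : ℝ≥0∞ :=
  if p = ∞ then essSup g μ else (∫⁻ x, g x ^ p.toReal ∂μ) ^ (1 / p.toReal)

/-- `L_p` quasi-norm (`0 < p ≤ ∞`) of a real valued function. -/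
def lpNorm {α : Type*} [MeasurableSpace α] (μ : Measure α) (p : ℝ≥0∞) (f : α → ℝ) : ℝ≥0∞ :=
  lpNormE μ p (fun x => (‖f x‖₊ : ℝ≥0∞))

/-- The step function `Σ_k λ_{j,k} χ_{j,k}` of level `j`. -/
def layerFun (d : ℕ) (lam : (Fin d → ℤ) → (Fin d → ℤ) → ℝ) (j : Fin d → ℤ)
    (x : Fin d → ℝ) : ℝ :=
  ∑' k : Fin d → ℤ, Set.indicator (dyadicBox d j k) (fun _ => lam j k) x

/-- The index set `ℕ_{-1}^d`. -/
def IdxJ (d : ℕ) := {j : Fin d → ℤ // ∀ i, -1 ≤ j i}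

/-- The sequence space quasi-norm `s^r_{p,θ} b`. -/
def sbNorm (d : ℕ) (r : ℝ) (p θ : ℝ≥0∞) (lam : (Fin d → ℤ) → (Fin d → ℤ) → ℝ) : ℝ≥0∞ :=
  if θ = ∞ then ⨆ j : IdxJ d, wt r j.1 * lpNorm volume p (layerFun d lam j.1)
  else (∑' j : IdxJ d, (wt r j.1 * lpNorm volume p (layerFun d lam j.1)) ^ θ.toReal) ^ (1/θ.toReal)

/-- The sequence space quasi-norm `s^r_{p,θ} f`. -/
def sfNorm (d : ℕ) (r : ℝ) (p θ : ℝ≥0∞) (lam : (Fin d → ℤ) → (Fin d → ℤ) → ℝ) : ℝ≥0∞ :=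
  if θ = ∞ then lpNormE volume p (fun x => ⨆ j : IdxJ d, wt r j.1 * (‖layerFun d lam j.1 x‖₊ : ℝ≥0∞))
  else lpNormE volume p
    (fun x => (∑' j : IdxJ d, (wt r j.1 * (‖layerFun d lam j.1 x‖₊ : ℝ≥0∞)) ^ θ.toReal) ^ (1/θ.toReal))

/-- An admissible pair of local mean kernels `Ψ_0, Ψ_1 ∈ S(ℝ)` with `L` vanishing
moments for `Ψ_1` and nondegenerate Fourier transforms. -/
structure LocalMeanKernel (L : ℕ) where
  Ψ0 : SchwartzMap ℝ ℝ
  Ψ1 : SchwartzMap ℝ ℝ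
  ε : ℝ
  ε_pos : 0 < ε
  pos0 : ∀ ξ : ℝ, |ξ| < ε → FourierTransform.fourier (fun x : ℝ => (Ψ0 x : ℂ)) ξ ≠ 0
  pos1 : ∀ ξ : ℝ, ε/2 < |ξ| → |ξ| < 2*ε → FourierTransform.fourier (fun x : ℝ => (Ψ1 x : ℂ)) ξ ≠ 0
  moment : ∀ α : ℕ, α < L → (∫ x : ℝ, x ^ α * Ψ1 x) = 0

/-- The dilated local means `Ψ_j`. -/
def lmFun {L : ℕ} (K : LocalMeanKernel L) (j : ℕ) (x : ℝ) : ℝ :=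
  if j = 0 then K.Ψ0 x else (2:ℝ)^(j-1) * K.Ψ1 ((2:ℝ)^(j-1) * x)

/-- The convolution `Ψ_j * f` with the tensorized local means, `j ∈ ℕ_0^d`. -/
def lmConv (d : ℕ) {L : ℕ} (K : LocalMeanKernel L) (j : Fin d → ℕ)
    (f : (Fin d → ℝ) → ℝ) (x : Fin d → ℝ) : ℝ :=
  ∫ y : Fin d → ℝ, (∏ i, lmFun K (j i) (x i - y i)) * f y

/-- The Besov quasi-norm of dominating mixed smoothness `S^r_{p,θ}B(ℝ^d)`
(with respect to the local mean kernel `K`). -/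
def besovNorm (d : ℕ) {L : ℕ} (K : LocalMeanKernel L) (r : ℝ) (p θ : ℝ≥0∞)
    (f : (Fin d → ℝ) → ℝ) : ℝ≥0∞ :=
  if θ = ∞ then ⨆ j : Fin d → ℕ, wtN r j * lpNorm volume p (lmConv d K j f)
  else (∑' j : Fin d → ℕ, (wtN r j * lpNorm volume p (lmConv d K j f)) ^ θ.toReal) ^ (1/θ.toReal)

/-- The Lizorkin–Triebel quasi-norm of dominating mixed smoothness `S^r_{p,θ}F(ℝ^d)`
(with respect to the local mean kernel `K`). -/
def tlNorm (d : ℕ) {L : ℕ} (K : LocalMeanKernel L) (r : ℝ) (p θ : ℝ≥0∞)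
    (f : (Fin d → ℝ) → ℝ) : ℝ≥0∞ :=
  if θ = ∞ then lpNormE volume p (fun x => ⨆ j : Fin d → ℕ, wtN r j * (‖lmConv d K j f x‖₊ : ℝ≥0∞))
  else lpNormE volume p
    (fun x => (∑' j : Fin d → ℕ, (wtN r j * (‖lmConv d K j f x‖₊ : ℝ≥0∞)) ^ θ.toReal) ^ (1/θ.toReal))

/-- The index set of the tensorized Faber spline system. -/
def FaberIdx (d : ℕ) := IdxJ d × (Fin d → ℤ)

/-- Unconditional convergence of the series `Σ term_{j,k}` to `f` with respect
to the quasi-norm `Nrm`: the net of finite partial sums converges to `f`. -/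
def UnconditionalTo (d : ℕ) (Nrm : ((Fin d → ℝ) → ℝ) → ℝ≥0∞)
    (term : FaberIdx d → (Fin d → ℝ) → ℝ) (f : (Fin d → ℝ) → ℝ) : Prop :=
  ∀ δ : ℝ, 0 < δ → ∃ F₀ : Finset (FaberIdx d), ∀ F : Finset (FaberIdx d), F₀ ⊆ F →
    Nrm (fun x => f x - ∑ jk ∈ F, term jk x) < ENNReal.ofReal δ

/-- The term `λ_{2m;j,k}(f) s_{2m;j,k}` of the Faber spline series of `f`. -/
def faberTerm (d m : ℕ) (ψs Lc : ℝ → ℝ) (f : (Fin d → ℝ) → ℝ)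
    (jk : FaberIdx d) (x : Fin d → ℝ) : ℝ :=
  faberCoeff d m f jk.1.1 jk.2 * faber d m ψs Lc jk.1.1 jk.2 x

/-- The term `λ_{2m;j,k} s_{2m;j,k}` for a given coefficient sequence. -/
def seqTerm (d m : ℕ) (ψs Lc : ℝ → ℝ) (lam : (Fin d → ℤ) → (Fin d → ℤ) → ℝ)
    (jk : FaberIdx d) (x : Fin d → ℝ) : ℝ :=
  lam jk.1.1 jk.2 * faber d m ψs Lc jk.1.1 jk.2 x

/-- The exponent `α_i`: `α = 1` if `l ≥ 0` and `α = 2m−1` if `l < 0`. -/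
def alphaExp (m : ℕ) (l : ℤ) : ℤ := if 0 ≤ l then 1 else 2*(m:ℤ) - 1

/-- The dyadic point `x_{j,k}`: `2^{-j}k` for `j ≥ 0` and `k` for `j = -1`. -/
def dyadicPt (j k : ℤ) : ℝ := if j = -1 then (k:ℝ) else (2:ℝ)^(-j) * (k:ℝ)

end

/-!
Since `0 ≤ N_m ≤ 1` and `N_m` vanishes outside `[0, m)`, at most `m` integer translates of `N_m`
are nonzero at any point, so `Σ_n N_m(y - n) ≤ m`. Summing the absolutely convergent
B-spline series of `L^m` then gives `Σ_n |L^m(y - n)| ≤ m Σ_k |c_k|` uniformly in `y`, and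
the tensor structure turns this into the bound `(m Σ_k |c_k|)^d` for
`Σ_n Π_i |L^m(x_i - n_i)|`, which controls the series defining `J^m f` by `‖f‖_∞`.
-/

theorem bspline_nonneg : ∀ (m : ℕ) (x : ℝ), 0 ≤ bspline m x
  | 0, _ => le_rfl
  | 1, x => by rw [bspline]; split_ifs <;> norm_num
  | n + 2, x =>
    intervalIntegral.integral_nonneg zero_le_one fun t _ => bspline_nonneg (n + 1) (x - t)

theorem bspline_le_one : ∀ (m : ℕ) (x : ℝ), bspline m x ≤ 1
  | 0, _ => zero_le_one
  | 1, x => by rw [bspline]; split_ifs <;> norm_num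
  | n + 2, x => by
    have h := intervalIntegral.norm_integral_le_of_norm_le_const (a := 0) (b := 1)
      (f := fun t => bspline (n + 1) (x - t)) (C := 1) fun t _ => by
        rw [Real.norm_of_nonneg (bspline_nonneg _ _)]
        exact bspline_le_one (n + 1) (x - t)
    simpa [bspline] using (le_abs_self _).trans h

theorem support_bspline_subset : ∀ m : ℕ, Function.support (bspline m) ⊆ Set.Ico 0 (m : ℝ)
  | 0 => fun x hx => (hx rfl).elim
  | 1 => fun x hx => by
    by_contra h
    exact hx (by simp only [bspline]; rw [if_neg (by simpa using h)])
  | n + 2 => fun x hx => by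
    by_contra h
    refine hx ((intervalIntegral.integral_congr (g := fun _ => 0) fun t ht => ?_).trans
      intervalIntegral.integral_zero)
    by_contra hs
    have hmem := support_bspline_subset (n + 1) hs
    rw [Set.uIcc_of_le zero_le_one] at ht
    simp only [Set.mem_Ico, Set.mem_Icc] at h hmem ht
    push_cast at h hmem
    exact h ⟨by linarith, by linarith⟩

theorem sum_bspline_sub_intCast_le (m : ℕ) (y : ℝ) (F : Finset ℤ) :
    ∑ n ∈ F, bspline m (y - n) ≤ m := by
  classical
  have hsub : {n ∈ F | bspline m (y - (n : ℤ)) ≠ 0} ⊆ Finset.Ioc (⌊y⌋ - (m : ℤ)) ⌊y⌋ := by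
    intro n hn
    obtain ⟨hlo, hhi⟩ := support_bspline_subset m (Finset.mem_filter.mp hn).2
    have hlt : ((⌊y⌋ - m : ℤ) : ℝ) < n := by push_cast; linarith [Int.floor_le y]
    exact Finset.mem_Ioc.mpr ⟨by exact_mod_cast hlt, Int.le_floor.mpr (by linarith)⟩
  calc ∑ n ∈ F, bspline m (y - n)
      = ∑ n ∈ F with bspline m (y - (n : ℤ)) ≠ 0, bspline m (y - n) :=
        (Finset.sum_filter_ne_zero _).symm
    _ ≤ (Finset.card {n ∈ F | bspline m (y - (n : ℤ)) ≠ 0}) • (1 : ℝ) :=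
        Finset.sum_le_card_nsmul _ _ _ fun n _ => bspline_le_one m _
    _ ≤ m := by
        rw [nsmul_one, Nat.cast_le]
        simpa using Finset.card_le_card hsub

theorem abs_tsum_le_of_sum_abs_le {α : Type*} {g : α → ℝ} {K : ℝ}
    (h : ∀ F : Finset α, ∑ n ∈ F, |g n| ≤ K) : |∑' n, g n| ≤ K := by
  have hs : Summable fun n => |g n| := summable_of_sum_le (fun n => abs_nonneg _) h
  calc |∑' n, g n| ≤ ∑' n, |g n| := by
        simpa only [Real.norm_eq_abs] using norm_tsum_le_tsum_norm (f := g) (by simpa using hs)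
    _ ≤ K := hs.tsum_le_of_sum_le h

theorem summable_pow_natAbs {q : ℝ} (hq0 : 0 ≤ q) (hq1 : q < 1) :
    Summable fun k : ℤ => q ^ k.natAbs :=
  .of_nat_of_neg (by simpa using summable_geometric_of_lt_one hq0 hq1)
    (by simpa using summable_geometric_of_lt_one hq0 hq1)

theorem sum_abs_bspline_series_sub_intCast_le {m : ℕ} {a : ℝ} {c : ℤ → ℝ} {L : ℝ → ℝ}
    (hc : Summable fun k => |c k|) (hL : ∀ x, L x = ∑' k : ℤ, c k * bspline m (x + a - k))
    (x : ℝ) (F : Finset ℤ) :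
    ∑ n ∈ F, |L (x - n)| ≤ m * ∑' k, |c k| := by
  have habs (z : ℝ) (k : ℤ) : ‖c k * bspline m z‖ = |c k| * bspline m z := by
    rw [Real.norm_eq_abs, abs_mul, abs_of_nonneg (bspline_nonneg m z)]
  have hsumm (z : ℝ) : Summable fun k : ℤ => |c k| * bspline m (z - k) :=
    hc.of_nonneg_of_le (fun k => mul_nonneg (abs_nonneg _) (bspline_nonneg _ _))
      fun k => mul_le_of_le_one_right (abs_nonneg _) (bspline_le_one _ _)
  have hpoint (n : ℤ) : |L (x - n)| ≤ ∑' k : ℤ, |c k| * bspline m (x + a - n - k) := by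
    rw [hL, ← Real.norm_eq_abs, sub_add_eq_add_sub]
    simp_rw [← habs] at hsumm ⊢
    exact norm_tsum_le_tsum_norm (hsumm _)
  have hshift (k : ℤ) : ∑ n ∈ F, bspline m (x + a - n - k) ≤ m := by
    simpa only [sub_right_comm _ (k : ℝ)] using sum_bspline_sub_intCast_le m (x + a - k) F
  calc ∑ n ∈ F, |L (x - n)| ≤ ∑ n ∈ F, ∑' k : ℤ, |c k| * bspline m (x + a - n - k) :=
        Finset.sum_le_sum fun n _ => hpoint n
    _ = ∑' k : ℤ, |c k| * ∑ n ∈ F, bspline m (x + a - n - k) := by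
        simp_rw [Finset.mul_sum]
        exact (Summable.tsum_finsetSum fun n _ => hsumm _).symm
    _ ≤ ∑' k : ℤ, |c k| * m := by
        have hle (k : ℤ) := mul_le_mul_of_nonneg_left (hshift k) (abs_nonneg (c k))
        refine Summable.tsum_le_tsum hle ?_ (hc.mul_right _)
        exact (hc.mul_right _).of_nonneg_of_le (fun k => mul_nonneg (abs_nonneg _)
          (Finset.sum_nonneg fun n _ => bspline_nonneg _ _)) hle
    _ = m * ∑' k, |c k| := by rw [tsum_mul_right, mul_comm]

theorem sum_prod_abs_le_pow {ι α : Type*} [Fintype ι] {φ : ι → α → ℝ} {B : ℝ}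
    (hφ : ∀ i (F : Finset α), ∑ a ∈ F, |φ i a| ≤ B) (F : Finset (ι → α)) :
    ∑ n ∈ F, ∏ i, |φ i (n i)| ≤ B ^ Fintype.card ι := by
  classical
  let G (i : ι) : Finset α := F.image fun n => n i
  calc ∑ n ∈ F, ∏ i, |φ i (n i)| ≤ ∑ n ∈ Fintype.piFinset G, ∏ i, |φ i (n i)| :=
        Finset.sum_le_sum_of_subset_of_nonneg
          (fun n hn => Fintype.mem_piFinset.mpr fun i => Finset.mem_image_of_mem _ hn)
          fun n _ _ => Finset.prod_nonneg fun i _ => abs_nonneg _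
    _ = ∏ i, ∑ a ∈ G i, |φ i a| := (Finset.prod_univ_sum G fun i a => |φ i a|).symm
    _ ≤ ∏ _i : ι, B :=
        Finset.prod_le_prod (fun i _ => Finset.sum_nonneg fun a _ => abs_nonneg _)
          fun i _ => hφ i (G i)
    _ = B ^ Fintype.card ι := by rw [Finset.prod_const, Finset.card_univ]

theorem abs_JNm_le {d N : ℕ} {Lc : ℝ → ℝ} {B : ℝ}
    (hLc : ∀ y (F : Finset ℤ), ∑ n ∈ F, |Lc (y - n)| ≤ B) {f : (Fin d → ℝ) → ℝ} {M : ℝ}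
    (hf : ∀ x, |f x| ≤ M) (x : Fin d → ℝ) :
    |JNm d N Lc f x| ≤ B ^ d * M := by
  have hM : 0 ≤ M := (abs_nonneg _).trans (hf 0)
  have htensor (F : Finset (Fin d → ℤ)) :
      ∑ n ∈ F, ∏ i, |Lc (2 ^ N * x i - n i)| ≤ B ^ d := by
    simpa using sum_prod_abs_le_pow (φ := fun i (k : ℤ) => Lc (2 ^ N * x i - k))
      (fun i => hLc _) F
  refine abs_tsum_le_of_sum_abs_le fun F => ?_
  calc ∑ n ∈ F, |f (fun i => n i / 2 ^ N) * ∏ i, Lc (2 ^ N * x i - n i)|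
      ≤ ∑ n ∈ F, M * ∏ i, |Lc (2 ^ N * x i - n i)| := Finset.sum_le_sum fun n _ => by
        rw [abs_mul, Finset.abs_prod]
        exact mul_le_mul_of_nonneg_right (hf _) (Finset.prod_nonneg fun i _ => abs_nonneg _)
    _ = M * ∑ n ∈ F, ∏ i, |Lc (2 ^ N * x i - n i)| := (Finset.mul_sum ..).symm
    _ ≤ M * B ^ d := mul_le_mul_of_nonneg_left (htensor F) hM
    _ = B ^ d * M := mul_comm _ _

theorem IsCardinalSpline.exists_sum_abs_sub_intCast_le {m : ℕ} {Lc : ℝ → ℝ}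
    (hLc : IsCardinalSpline m Lc) : ∃ B, ∀ y (F : Finset ℤ), ∑ n ∈ F, |Lc (y - n)| ≤ B := by
  obtain ⟨⟨c, ⟨C, -, q, hq0, hq1, hc⟩, hrep⟩, -⟩ := hLc
  have hcs : Summable fun k => |c k| :=
    ((summable_pow_natAbs hq0.le hq1).mul_left C).of_nonneg_of_le (fun _ => abs_nonneg _) hc
  exact ⟨_, sum_abs_bspline_series_sub_intCast_le hcs hrep⟩

theorem Jm_bounded_on_Linfty_general (d m : ℕ)
    (Lc : ℝ → ℝ) (hLc : IsCardinalSpline m Lc) :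
    ∃ K > (0:ℝ), ∀ f : (Fin d → ℝ) → ℝ, ∀ M : ℝ, (∀ x, |f x| ≤ M) →
      ∀ x : Fin d → ℝ, |JNm d 0 Lc f x| ≤ K * M := by
  obtain ⟨B, hB⟩ := hLc.exists_sum_abs_sub_intCast_le
  refine ⟨max B 1 ^ d, by positivity, fun f M hf x => abs_JNm_le (fun y F => ?_) hf x⟩
  exact (hB y F).trans (le_max_left _ _)

/-- the fundamental spline interpolation operator `J^m` is bounded
on `L_∞`: `‖J^m f‖_∞ ≤ K(m) ‖f‖_∞` for every bounded `f` on `ℝ^d`. -/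
theorem Jm_bounded_on_Linfty (d m : ℕ) (hd : 1 ≤ d) (hm : 1 ≤ m)
    (Lc : ℝ → ℝ) (hLc : IsCardinalSpline m Lc) :
    ∃ K > (0:ℝ), ∀ f : (Fin d → ℝ) → ℝ, ∀ M : ℝ, (∀ x, |f x| ≤ M) →
      ∀ x : Fin d → ℝ, |JNm d 0 Lc f x| ≤ K * M :=
  Jm_bounded_on_Linfty_general d m Lc hLc
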